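/- Let G be a connected bipartite graph on N vertices with bipartition sizes n₁ = |V₁| ≤ n₂ = |V₂|, and let ℓ_k := diam(HM_k) + 1. If n − k ≥ n₁, then N_B^n(ℓ_k) ≥ N^{n−k+1−n₁}, i.e. N_B^n(ℓ_k) ≥ C·N^{n−k} with the constant C = N^{1−n₁} depending only on G. -/

import Mathlib

/-!
Put `m = n - k - n₁` and count, in a word of `HM_n`, the positions `i ≥ m` at which the letters
`i` and `i + 1` lie on different sides of the bipartition. Along an edge of `HM_n` this count
changes by at most one, and an edge that alters a letter at a position `≤ m` joins two words for
which it vanishes. Extending each of the `N^(m+1)` words of length `m + 1` by a walk in `G` gives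
words where the count takes its maximum `n - 1 - m`, so any two of them are at distance at least
`2(n - 1 - m) + 1`. On the other side, every word of `HM_k` reaches a word lying on one side of
the bipartition in `k - 1` steps, and two such words are joined in `2n₁` steps by moving all
letters simultaneously along walks of `G` of a common length; hence
`diam HM_k ≤ 2(k + n₁ - 1) = 2(n - 1 - m)`, and no `ℓ_k`-box contains two of the extended
words.
-/

open Filter Finset

/-- A subgraph `B` of a graph `H` is an `ℓ`-box if any two of its vertices are at
distance at most `ℓ - 1` *within* `B`. -/
def SimpleGraph.IsBox {V : Type*} (H : SimpleGraph V) (ℓ : ℕ) (B : H.Subgraph) : Prop :=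
  ∀ u v : B.verts, B.coe.Reachable u v ∧ B.coe.dist u v ≤ ℓ - 1

/-- `coveringNumber H ℓ` is the minimum number of `ℓ`-boxes whose vertex sets cover `H`. -/
noncomputable def coveringNumber {V : Type*} (H : SimpleGraph V) (ℓ : ℕ) : ℕ :=
  sInf {m : ℕ | ∃ F : Finset H.Subgraph, F.card = m ∧ (∀ B ∈ F, H.IsBox ℓ B) ∧
    ∀ v : V, ∃ B ∈ F, v ∈ B.verts}

/-- The adjacency-generating relation of the hierarchical model `HM_n`: the two words
agree on a (maximal) common prefix of length `k`; beyond the prefix one word has all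
its letters in `V₁` (`typ = true`) and the other has all its letters in `V₂`
(`typ = false`); and every coordinate pair beyond the prefix is an edge of the base
graph `G`. -/
def HMRel (N : ℕ) (G : SimpleGraph (Fin N)) (typ : Fin N → Bool) (n : ℕ)
    (x y : Fin n → Fin N) : Prop :=
  ∃ k : Fin n,
    (∀ i : Fin n, i < k → x i = y i) ∧
    (∃ t : Bool, (∀ i : Fin n, k ≤ i → typ (x i) = t) ∧
                 (∀ i : Fin n, k ≤ i → typ (y i) = !t)) ∧
    (∀ i : Fin n, k ≤ i → G.Adj (x i) (y i))

/-- The hierarchical graph `HM_n` on words of length `n` over the alphabet `Fin N`. -/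
def HM (N : ℕ) (G : SimpleGraph (Fin N)) (typ : Fin N → Bool) (n : ℕ) :
    SimpleGraph (Fin n → Fin N) :=
  SimpleGraph.fromRel (HMRel N G typ n)

namespace SimpleGraph

variable {V : Type*} {G : SimpleGraph V} {typ : V → Bool}

lemma isBox_singletonSubgraph (ℓ : ℕ) (v : V) : G.IsBox ℓ (G.singletonSubgraph v) := by
  rintro ⟨u, rfl⟩ ⟨w, rfl⟩
  exact ⟨Reachable.refl _, by simp⟩

lemma card_le_coveringNumber [Fintype V] {ι : Type*} [Fintype ι] {d : ℕ} (f : ι → V)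
    (hf : ∀ i j, i ≠ j → ∀ p : G.Walk (f i) (f j), d < p.length) :
    Fintype.card ι ≤ coveringNumber G (d + 1) := by
  classical
  refine le_csInf ⟨_, univ.image G.singletonSubgraph, rfl,
    by simp [isBox_singletonSubgraph], fun v => ⟨_, mem_image_of_mem _ (mem_univ v), rfl⟩⟩ ?_
  rintro _ ⟨F, rfl, hbox, hcov⟩
  choose B hBF hB using fun i => hcov (f i)
  rw [← card_univ]
  refine card_le_card_of_injOn B (fun i _ => hBF i) fun i _ j _ hij => by_contra fun hne => ?_
  obtain ⟨hreach, hdist⟩ := hbox (B i) (hBF i) ⟨_, hB i⟩ ⟨_, hij ▸ hB j⟩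
  obtain ⟨p, hp⟩ := hreach.exists_walk_length_eq_dist
  have := (hf i j hne (p.map (B i).hom)).trans_eq (p.length_map _)
  omega

lemma diam_le_of_forall_exists_walk {d : ℕ} (h : ∀ u v, ∃ p : G.Walk u v, p.length ≤ d) :
    G.diam ≤ d := by
  have : G.ediam ≤ d := ediam_le_of_edist_le fun u v => by
    obtain ⟨p, hp⟩ := h u v
    exact p.edist_le.trans (by exact_mod_cast hp)
  simpa [diam] using ENat.toNat_le_toNat this (ENat.natCast_ne_top d)


lemma typ_eq_not_of_adj (hbip : ∀ x y, G.Adj x y → typ x ≠ typ y) {u v : V} (h : G.Adj u v) :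
    typ v = !typ u :=
  Bool.eq_not_iff.2 (hbip u v h).symm

lemma typ_eq_iff_even_length (hbip : ∀ x y, G.Adj x y → typ x ≠ typ y) {u v : V}
    (p : G.Walk u v) : typ u = typ v ↔ Even p.length := by
  rw [(Coloring.mk typ fun h => hbip _ _ h).even_length_iff_congr p, Bool.eq_iff_iff]
  rfl

lemma Walk.length_add_toNat_le_two_mul_countP (hbip : ∀ x y, G.Adj x y → typ x ≠ typ y)
    {u v : V} (p : G.Walk u v) :
    p.length + (typ u).toNat ≤ 2 * p.support.countP typ := by
  induction p with
  | nil => cases h : typ _ <;> simp [h]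
  | @cons u w v h q ih =>
    have hw := typ_eq_not_of_adj hbip h
    simp only [Walk.length_cons, Walk.support_cons, List.countP_cons]
    cases hu : typ u <;> simp [hu, hw] at ih ⊢ <;> omega

lemma Walk.IsPath.length_le_two_mul_card [Fintype V]
    (hbip : ∀ x y, G.Adj x y → typ x ≠ typ y) {u v : V} {p : G.Walk u v}
    (hp : p.IsPath) : p.length ≤ 2 * #{x | typ x = true} := by
  classical
  have hcount : p.support.countP typ ≤ #{x | typ x = true} := by
    rw [List.countP_eq_length_filter, ← List.toFinset_card_of_nodup (hp.support_nodup.filter _)]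
    exact card_le_card fun x hx => by simp_all
  have := p.length_add_toNat_le_two_mul_countP hbip
  omega

lemma Walk.exists_length_eq_add_two_mul {u v w : V} (hv : G.Adj v w) (p : G.Walk u v) (s : ℕ) :
    ∃ q : G.Walk u v, q.length = p.length + 2 * s := by
  induction s with
  | zero => exact ⟨p, rfl⟩
  | succ s ih =>
    obtain ⟨q, hq⟩ := ih
    exact ⟨q.append (.cons hv (.cons hv.symm .nil)), by simp [hq]; ring⟩

lemma Connected.exists_walk_length_eq [Fintype V] (hconn : G.Connected)
    (hbip : ∀ x y, G.Adj x y → typ x ≠ typ y) {u v w : V} (hv : G.Adj v w) {T : ℕ}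
    (hpar : typ u = typ v ↔ Even T) (hT : 2 * #{x | typ x = true} ≤ T + 1) :
    ∃ p : G.Walk u v, p.length = T := by
  obtain ⟨p, hp, -⟩ := (hconn u v).exists_path_of_dist
  have hlen := hp.length_le_two_mul_card hbip
  have hpar' := (typ_eq_iff_even_length hbip p).symm.trans hpar
  rw [Nat.even_iff, Nat.even_iff] at hpar'
  obtain ⟨q, hq⟩ := p.exists_length_eq_add_two_mul hv ((T - p.length) / 2)
  exact ⟨q, by omega⟩

end SimpleGraph

section HierarchicalModel

variable {N : ℕ} {G : SimpleGraph (Fin N)} {typ : Fin N → Bool} {n : ℕ}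
  {x y : Fin n → Fin N}

lemma HMRel.symm (h : HMRel N G typ n x y) : HMRel N G typ n y x := by
  obtain ⟨k, hpre, ⟨t, hx, hy⟩, hadj⟩ := h
  exact ⟨k, fun i hi => (hpre i hi).symm, ⟨!t, hy, by simpa using hx⟩,
    fun i hi => (hadj i hi).symm⟩

lemma hm_adj_iff : (HM N G typ n).Adj x y ↔ HMRel N G typ n x y := by
  refine ⟨fun h => ((SimpleGraph.fromRel_adj _ _ _).1 h).2.elim id HMRel.symm,
    fun h => (SimpleGraph.fromRel_adj _ _ _).2 ⟨fun hxy => ?_, Or.inl h⟩⟩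
  obtain ⟨k, -, -, hadj⟩ := h
  exact (hadj k le_rfl).ne (congrFun hxy k)

end HierarchicalModel

section TypeSwitches

variable {α : Type*} {typ : α → Bool} {n m : ℕ}

def typeSwitches (typ : α → Bool) (m : ℕ) (x : Fin n → α) : Finset ℕ :=
  {i ∈ Ico m (n - 1) |
    ∃ h : i + 1 < n, typ (x ⟨i, Nat.lt_of_succ_lt h⟩) ≠ typ (x ⟨i + 1, h⟩)}

lemma typeSwitches_eq_empty {x : Fin n → α} {j : ℕ} {t : Bool} (hj : j ≤ m)
    (hx : ∀ i : Fin n, j ≤ i → typ (x i) = t) : typeSwitches typ m x = ∅ := by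
  refine filter_eq_empty_iff.2 fun i hi => ?_
  rw [mem_Ico] at hi
  rintro ⟨h, hne⟩
  exact hne (by rw [hx _ (show j ≤ i by omega), hx _ (show j ≤ i + 1 by omega)])

end TypeSwitches

section WalkLowerBound

variable {N : ℕ} {G : SimpleGraph (Fin N)} {typ : Fin N → Bool} {n m : ℕ}

lemma card_typeSwitches_le_of_hmRel {x y : Fin n → Fin N} (h : HMRel N G typ n x y) :
    #(typeSwitches typ m y) ≤ #(typeSwitches typ m x) + 1 := by
  obtain ⟨k, hpre, ⟨t, -, hy⟩, -⟩ := h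
  have hsub : typeSwitches typ m y ⊆ insert ((k : ℕ) - 1) (typeSwitches typ m x) := by
    intro i hi
    simp only [typeSwitches, mem_filter, mem_insert] at hi ⊢
    obtain ⟨hi, h, hne⟩ := hi
    by_cases hik : (k : ℕ) ≤ i
    · exact absurd (by rw [hy _ hik, hy _ (show (k : ℕ) ≤ i + 1 by omega)]) hne
    by_cases hik' : i + 1 < k
    · rw [← hpre _ (show i < (k : ℕ) by omega), ← hpre _ hik'] at hne
      exact .inr ⟨hi, h, hne⟩
    · exact .inl (by omega)
  exact (card_le_card hsub).trans (card_insert_le _ _)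

lemma card_typeSwitches_le_of_walk {x y : Fin n → Fin N} (p : (HM N G typ n).Walk x y) :
    #(typeSwitches typ m y) ≤ #(typeSwitches typ m x) + p.length := by
  induction p with
  | nil => simp
  | cons h q ih =>
    have := card_typeSwitches_le_of_hmRel (m := m) (hm_adj_iff.1 h)
    rw [SimpleGraph.Walk.length_cons]
    omega

/-- A walk that changes a letter at position `i ≤ m` must pass through an edge whose two ends
have no type switches from `m` on. -/
lemma card_typeSwitches_add_le_length {x y : Fin n → Fin N} (p : (HM N G typ n).Walk x y)
    {i : Fin n} (hi : (i : ℕ) ≤ m) (hne : x i ≠ y i) :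
    #(typeSwitches typ m x) + #(typeSwitches typ m y) + 1 ≤ p.length := by
  induction p with
  | nil => exact absurd rfl hne
  | @cons x z y h q ih =>
    obtain ⟨k, hpre, ⟨t, hx, hz⟩, -⟩ := hm_adj_iff.1 h
    rw [SimpleGraph.Walk.length_cons]
    by_cases hki : k ≤ i
    · have hkm : (k : ℕ) ≤ m := le_trans hki hi
      rw [typeSwitches_eq_empty hkm hx]
      have := card_typeSwitches_le_of_walk (m := m) q
      rw [typeSwitches_eq_empty hkm hz] at this
      simp only [card_empty] at this ⊢
      omega
    · have := ih fun hzy => hne ((hpre i (not_le.1 hki)).trans hzy)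
      have := card_typeSwitches_le_of_hmRel (m := m) (hm_adj_iff.1 h).symm
      omega

end WalkLowerBound

section PaddedWords

variable {α : Type*} {G : SimpleGraph α} {typ : α → Bool} {nb : α → α} {n m : ℕ}

def padWord (nb : α → α) (m : ℕ) (w : Fin (m + 1) → α) : Fin n → α :=
  fun i => nb^[i - m] (w ⟨min i m, by omega⟩)

lemma padWord_of_le (w : Fin (m + 1) → α) {i : Fin n} (hi : (i : ℕ) ≤ m) :
    padWord nb m w i = w ⟨i, by omega⟩ := by
  simp [padWord, Nat.sub_eq_zero_of_le hi, min_eq_left hi]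

lemma card_typeSwitches_padWord (hbip : ∀ x y, G.Adj x y → typ x ≠ typ y)
    (hnb : ∀ v, G.Adj v (nb v)) (w : Fin (m + 1) → α) :
    #(typeSwitches typ m (padWord nb m w : Fin n → α)) = n - 1 - m := by
  rw [typeSwitches, filter_true_of_mem, Nat.card_Ico]
  intro i hi
  rw [mem_Ico] at hi
  refine ⟨by omega, ?_⟩
  have hsucc : padWord nb m w (⟨i + 1, by omega⟩ : Fin n) =
      nb (padWord nb m w (⟨i, by omega⟩ : Fin n)) := by
    simp only [padWord, show i + 1 - m = i - m + 1 by omega, Function.iterate_succ_apply',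
      show min (i + 1) m = min i m by omega]
  rw [hsucc, SimpleGraph.typ_eq_not_of_adj hbip (hnb _)]
  simp

end PaddedWords

section Diameter

variable {N : ℕ} {G : SimpleGraph (Fin N)} {typ : Fin N → Bool} {nb : Fin N → Fin N} {k : ℕ}

lemma hm_exists_walk_to_monochromatic (hbip : ∀ x y, G.Adj x y → typ x ≠ typ y)
    (hnb : ∀ v, G.Adj v (nb v)) (j : ℕ) (hj : j < k) (x : Fin k → Fin N) (t : Bool)
    (hx : ∀ i : Fin k, j ≤ i → typ (x i) = t) :
    ∃ y : Fin k → Fin N, ∃ t', (∀ i, typ (y i) = t') ∧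
      ∃ p : (HM N G typ k).Walk x y, p.length ≤ j := by
  induction j generalizing x t with
  | zero => exact ⟨x, t, fun i => hx i (Nat.zero_le _), .nil, le_rfl⟩
  | succ j ih =>
    by_cases hxj : typ (x ⟨j, by omega⟩) = t
    · obtain ⟨y, t', hy, p, hp⟩ := ih (by omega) x t fun i hi => by
        rcases hi.eq_or_lt with h | h
        · rwa [show i = ⟨j, by omega⟩ from Fin.ext h.symm]
        · exact hx i h
      exact ⟨y, t', hy, p, by omega⟩
    let z : Fin k → Fin N := fun i => if j < i then nb (x i) else x i
    have hz : ∀ i : Fin k, j < i → typ (z i) = !t := fun i hi => by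
      rw [show z i = nb (x i) from if_pos hi, SimpleGraph.typ_eq_not_of_adj hbip (hnb _),
        hx i hi]
    have hxz : (HM N G typ k).Adj x z := hm_adj_iff.2
      ⟨⟨j + 1, hj⟩, fun i hi => (if_neg (by simp [Fin.lt_def] at hi; omega)).symm,
        ⟨t, hx, hz⟩, fun i hi => by
          rw [show z i = nb (x i) from if_pos hi]
          exact hnb _⟩
    obtain ⟨y, t', hy, p, hp⟩ := ih (by omega) z (!t) fun i hi => by
      rcases hi.eq_or_lt with h | h
      · rw [show i = ⟨j, by omega⟩ from Fin.ext h.symm]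
        exact (congrArg typ (if_neg (lt_irrefl j))).trans (Bool.eq_not_iff.2 hxj)
      · exact hz i h
    exact ⟨y, t', hy, .cons hxz p, by simp only [SimpleGraph.Walk.length_cons]; omega⟩

lemma hm_exists_walk_of_forall_walk (hk : 0 < k) (hbip : ∀ x y, G.Adj x y → typ x ≠ typ y)
    (T : ℕ) (x y : Fin k → Fin N) (t : Bool) (hx : ∀ i, typ (x i) = t)
    (hxy : ∀ i, ∃ p : G.Walk (x i) (y i), p.length = T) :
    ∃ q : (HM N G typ k).Walk x y, q.length = T := by
  induction T generalizing x t with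
  | zero =>
    obtain rfl : x = y := funext fun i => (hxy i).elim fun p hp => p.eq_of_length_eq_zero hp
    exact ⟨.nil, rfl⟩
  | succ T ih =>
    have hstep : ∀ i, ∃ z, G.Adj (x i) z ∧ ∃ p : G.Walk z (y i), p.length = T := fun i => by
      obtain ⟨p, hp⟩ := hxy i
      have hnil : ¬ p.Nil := SimpleGraph.Walk.not_nil_iff_lt_length.2 (by omega)
      exact ⟨_, p.adj_snd hnil, p.tail, by have := p.length_tail_add_one hnil; omega⟩
    choose z hxz p hp using hstep
    have hz : ∀ i, typ (z i) = !t := fun i => by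
      rw [SimpleGraph.typ_eq_not_of_adj hbip (hxz i), hx i]
    have hadj : (HM N G typ k).Adj x z := hm_adj_iff.2
      ⟨⟨0, hk⟩, fun i hi => (Nat.not_lt_zero _ hi).elim,
        ⟨t, fun i _ => hx i, fun i _ => hz i⟩, fun i _ => hxz i⟩
    obtain ⟨q, hq⟩ := ih z (!t) hz fun i => ⟨p i, hp i⟩
    exact ⟨.cons hadj q, by simp [hq]⟩

lemma hm_exists_walk_of_monochromatic (hk : 0 < k) (hconn : G.Connected)
    (hbip : ∀ x y, G.Adj x y → typ x ≠ typ y) (hnb : ∀ v, G.Adj v (nb v))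
    (hn₁ : 0 < #{v | typ v = true}) {x y : Fin k → Fin N} {tx ty : Bool}
    (hx : ∀ i, typ (x i) = tx) (hy : ∀ i, typ (y i) = ty) :
    ∃ p : (HM N G typ k).Walk x y, p.length ≤ 2 * #{v | typ v = true} := by
  obtain ⟨T, hT, hTle, hpar⟩ : ∃ T, 2 * #{v | typ v = true} ≤ T + 1 ∧
      T ≤ 2 * #{v | typ v = true} ∧ (tx = ty ↔ Even T) := by
    by_cases h : tx = ty
    · exact ⟨_, by omega, le_rfl, iff_of_true h (even_two_mul _)⟩
    · exact ⟨2 * #{v | typ v = true} - 1, by omega, by omega,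
        iff_of_false h (by rw [Nat.even_iff]; omega)⟩
  obtain ⟨p, hp⟩ := hm_exists_walk_of_forall_walk hk hbip T x y tx hx fun i =>
    hconn.exists_walk_length_eq hbip (hnb _) (by rw [hx, hy]; exact hpar) hT
  exact ⟨p, hp ▸ hTle⟩

lemma hm_diam_le (hconn : G.Connected) (hbip : ∀ x y, G.Adj x y → typ x ≠ typ y)
    (hnb : ∀ v, G.Adj v (nb v)) (hn₁ : 0 < #{v | typ v = true}) (k : ℕ) :
    (HM N G typ k).diam ≤ 2 * (k + #{v | typ v = true} - 1) := by
  refine SimpleGraph.diam_le_of_forall_exists_walk fun u v => ?_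
  rcases Nat.eq_zero_or_pos k with rfl | hk
  · obtain rfl := Subsingleton.elim u v
    exact ⟨.nil, by simp⟩
  have hmono (x : Fin k → Fin N) : ∃ x' : Fin k → Fin N, ∃ t, (∀ i, typ (x' i) = t) ∧
      ∃ p : (HM N G typ k).Walk x x', p.length ≤ k - 1 :=
    hm_exists_walk_to_monochromatic hbip hnb (k - 1) (by omega) x (typ (x ⟨k - 1, by omega⟩))
      fun i hi => by rw [show i = ⟨k - 1, by omega⟩ from Fin.ext (by simp; omega)]
  obtain ⟨u', tu, hu', pu, hpu⟩ := hmono u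
  obtain ⟨v', tv, hv', pv, hpv⟩ := hmono v
  obtain ⟨q, hq⟩ := hm_exists_walk_of_monochromatic hk hconn hbip hnb hn₁ hu' hv'
  exact ⟨pu.append (q.append pv.reverse), by simp; omega⟩

end Diameter

theorem hm_boxing_lower_general (N : ℕ) (G : SimpleGraph (Fin N)) (typ : Fin N → Bool)
    (hconn : G.Connected)
    (hbip : ∀ x y : Fin N, G.Adj x y → typ x ≠ typ y)
    (hV1 : ∃ x, typ x = true) (hV2 : ∃ x, typ x = false)
    (n₁ : ℕ)
    (hn₁ : n₁ = (Finset.univ.filter fun x : Fin N => typ x = true).card)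
    (n k : ℕ) (hnk : n₁ ≤ n - k) :
    N ^ (n - k + 1 - n₁) ≤ coveringNumber (HM N G typ n) ((HM N G typ k).diam + 1) := by
  obtain ⟨a, ha⟩ := hV1
  obtain ⟨b, hb⟩ := hV2
  have : Nontrivial (Fin N) := ⟨a, b, fun h => by simp [h, hb] at ha⟩
  choose nb hnb using hconn.preconnected.exists_adj_of_nontrivial
  have hn₁pos : 0 < n₁ := hn₁ ▸ card_pos.2 ⟨a, by simpa using ha⟩
  subst hn₁
  set m := n - k - #{x | typ x = true}
  have hdiam := hm_diam_le hconn hbip hnb hn₁pos k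
  calc N ^ (n - k + 1 - #{x | typ x = true}) = Fintype.card (Fin (m + 1) → Fin N) := by
        simp only [Fintype.card_pi, Fintype.card_fin, prod_const, card_univ]
        congr 1
        omega
    _ ≤ _ := SimpleGraph.card_le_coveringNumber (padWord nb m) fun w w' hne p => by
      obtain ⟨i, hi⟩ := Function.ne_iff.1 hne
      have him : ((⟨i, by omega⟩ : Fin n) : ℕ) ≤ m := Nat.lt_succ_iff.1 i.2
      have := card_typeSwitches_add_le_length p him
        (by rwa [padWord_of_le w him, padWord_of_le w' him])
      rw [card_typeSwitches_padWord hbip hnb, card_typeSwitches_padWord hbip hnb] at this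
      omega

/-- With `ℓ_k := diam(HM_k) + 1` and `n₁ = |V₁| ≤ n₂ = |V₂|`, if
`n - k ≥ n₁` then `N_B^n(ℓ_k) ≥ N^(n - k + 1 - n₁)`. -/
theorem hm_boxing_lower (N : ℕ) (G : SimpleGraph (Fin N)) (typ : Fin N → Bool)
    (hconn : G.Connected)
    (hbip : ∀ x y : Fin N, G.Adj x y → typ x ≠ typ y)
    (hV1 : ∃ x, typ x = true) (hV2 : ∃ x, typ x = false)
    (n₁ n₂ : ℕ)
    (hn₁ : n₁ = (Finset.univ.filter fun x : Fin N => typ x = true).card)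
    (hn₂ : n₂ = (Finset.univ.filter fun x : Fin N => typ x = false).card)
    (hle : n₁ ≤ n₂)
    (n k : ℕ) (hnk : n₁ ≤ n - k) (hkn : k ≤ n) :
    N ^ (n - k + 1 - n₁) ≤ coveringNumber (HM N G typ n) ((HM N G typ k).diam + 1) :=
  hm_boxing_lower_general N G typ hconn hbip hV1 hV2 n₁ hn₁ n k hnk
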